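/- Let b : [0,∞) → ℝ be continuous with b(t) ≥ 0 for all t, and suppose there exist c < 1 and t₀ ≥ 0 such that t·b(t) ≤ c for all t ≥ t₀. Define λ(t) = exp((1/2)∫₀ᵗ b(τ)dτ). Then there exist constants C₁, C₂ > 0 such that C₁ · t/λ(t)² ≤ ∫₀ᵗ λ(τ)⁻² dτ ≤ C₂ · (1 + t/λ(t)²) for all t ≥ 0. -/

import Mathlib

/-!
Write `f = λ⁻²`, the solution of `f' = -b f`, `f 0 = 1`. Since `b ≥ 0`, `f` is nonincreasing,
which gives `t f(t) ≤ ∫₀ᵗ f` and `∫₀^{t₀} f ≤ t₀`. Past `t₀` the product rule gives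
`(τ f(τ))' = f(τ) (1 - τ b(τ)) ≥ (1 - c) f(τ)`, so `(1 - c) ∫_{t₀}^t f ≤ t f(t)`.
-/

open MeasureTheory intervalIntegral Set

lemma AntitoneOn.sub_mul_le_integral {f : ℝ → ℝ} {a t : ℝ} (hat : a ≤ t)
    (hf : AntitoneOn f (Icc a t)) : (t - a) * f t ≤ ∫ τ in a..t, f τ := by
  have hint : IntervalIntegrable f volume a t := (uIcc_of_le hat ▸ hf).intervalIntegrable
  calc (t - a) * f t = ∫ _ in a..t, f t := by simp
    _ ≤ ∫ τ in a..t, f τ := integral_mono_on hat intervalIntegrable_const hint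
          fun τ hτ => hf hτ (right_mem_Icc.2 hat) hτ.2

lemma AntitoneOn.integral_le_sub_mul {f : ℝ → ℝ} {a t : ℝ} (hat : a ≤ t)
    (hf : AntitoneOn f (Icc a t)) : ∫ τ in a..t, f τ ≤ (t - a) * f a := by
  have hint : IntervalIntegrable f volume a t := (uIcc_of_le hat ▸ hf).intervalIntegrable
  calc ∫ τ in a..t, f τ ≤ ∫ _ in a..t, f a := integral_mono_on hat hint intervalIntegrable_const
          fun τ hτ => hf (left_mem_Icc.2 hat) hτ hτ.1
    _ = (t - a) * f a := by simp

section LinearODE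

variable {f b : ℝ → ℝ} (hf : ∀ τ, HasDerivAt f (-(b τ * f τ)) τ)
include hf

lemma antitoneOn_Ici_of_hasDerivAt_neg_mul (hf_nonneg : ∀ τ, 0 ≤ f τ)
    (hb_nonneg : ∀ τ, 0 ≤ τ → 0 ≤ b τ) : AntitoneOn f (Ici 0) := by
  refine antitoneOn_of_deriv_nonpos (convex_Ici 0)
    (fun τ _ => (hf τ).continuousAt.continuousWithinAt)
    (fun τ _ => (hf τ).differentiableAt.differentiableWithinAt) fun τ hτ => ?_
  rw [interior_Ici] at hτ
  rw [(hf τ).deriv, neg_nonpos]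
  exact mul_nonneg (hb_nonneg τ hτ.le) (hf_nonneg τ)

lemma sub_mul_integral_le_of_hasDerivAt_neg_mul (hb : Continuous b) {a t c : ℝ} (hat : a ≤ t)
    (hf_nonneg : ∀ τ ∈ Icc a t, 0 ≤ f τ) (hbc : ∀ τ ∈ Icc a t, τ * b τ ≤ c) :
    (1 - c) * ∫ τ in a..t, f τ ≤ t * f t - a * f a := by
  have hf_cont : Continuous f := continuous_iff_continuousAt.2 fun τ => (hf τ).continuousAt
  have hderiv : ∀ τ, HasDerivAt (fun s => s * f s) (f τ * (1 - τ * b τ)) τ := fun τ =>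
    ((hasDerivAt_id' τ).mul (hf τ)).congr_deriv (by ring)
  have hderiv_cont : Continuous fun τ => f τ * (1 - τ * b τ) :=
    hf_cont.mul (continuous_const.sub (continuous_id.mul hb))
  rw [← integral_eq_sub_of_hasDerivAt (fun τ _ => hderiv τ) (hderiv_cont.intervalIntegrable _ _),
    ← intervalIntegral.integral_const_mul]
  refine integral_mono_on hat ((continuous_const.mul hf_cont).intervalIntegrable _ _)
    (hderiv_cont.intervalIntegrable _ _) fun τ hτ => ?_
  nlinarith [hf_nonneg τ hτ, hbc τ hτ]

lemma integral_le_add_mul_div_of_hasDerivAt_neg_mul (hb : Continuous b)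
    (hf_nonneg : ∀ τ, 0 ≤ f τ) (hf_zero : f 0 = 1) (hb_nonneg : ∀ τ, 0 ≤ τ → 0 ≤ b τ)
    {c t₀ : ℝ} (hc : c < 1) (ht₀ : 0 ≤ t₀) (hbc : ∀ τ, t₀ ≤ τ → τ * b τ ≤ c) {t : ℝ} (ht : 0 ≤ t) :
    ∫ τ in 0..t, f τ ≤ t₀ + t * f t / (1 - c) := by
  have hf_cont : Continuous f := continuous_iff_continuousAt.2 fun τ => (hf τ).continuousAt
  have hhead : ∀ {u}, 0 ≤ u → ∫ τ in 0..u, f τ ≤ u := fun hu => by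
    simpa [hf_zero] using ((antitoneOn_Ici_of_hasDerivAt_neg_mul hf hf_nonneg hb_nonneg).mono
      Icc_subset_Ici_self).integral_le_sub_mul hu
  have htail_nonneg : 0 ≤ t * f t / (1 - c) :=
    div_nonneg (mul_nonneg ht (hf_nonneg t)) (sub_nonneg.2 hc.le)
  rcases le_total t t₀ with htt₀ | ht₀t
  · linarith [hhead ht]
  · have htail : (1 - c) * ∫ τ in t₀..t, f τ ≤ t * f t :=
      (sub_mul_integral_le_of_hasDerivAt_neg_mul hf hb ht₀t (fun τ _ => hf_nonneg τ)
        fun τ hτ => hbc τ hτ.1).trans (sub_le_self _ (mul_nonneg ht₀ (hf_nonneg t₀)))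
    rw [← integral_add_adjacent_intervals (hf_cont.intervalIntegrable 0 t₀)
      (hf_cont.intervalIntegrable t₀ t)]
    exact add_le_add (hhead ht₀) ((le_div_iff₀' (sub_pos.2 hc)).2 htail)

end LinearODE

theorem stmt0 (b : ℝ → ℝ) (hb_cont : Continuous b)
    (hb_nonneg : ∀ t, 0 ≤ t → 0 ≤ b t)
    (c t₀ : ℝ) (hc : c < 1) (ht₀ : 0 ≤ t₀)
    (hbc : ∀ t, t₀ ≤ t → t * b t ≤ c)
    (lam : ℝ → ℝ)
    (hlam : ∀ t, lam t = Real.exp ((1/2) * ∫ τ in (0:ℝ)..t, b τ)) :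
    ∃ C₁ C₂ : ℝ, 0 < C₁ ∧ 0 < C₂ ∧ ∀ t, 0 ≤ t →
      C₁ * (t / (lam t)^2) ≤ (∫ τ in (0:ℝ)..t, ((lam τ)^2)⁻¹) ∧
      (∫ τ in (0:ℝ)..t, ((lam τ)^2)⁻¹) ≤ C₂ * (1 + t / (lam t)^2) := by
  set B : ℝ → ℝ := fun t => ∫ τ in (0:ℝ)..t, b τ
  have hB : ∀ τ, HasDerivAt B (b τ) τ := fun τ =>
    integral_hasDerivAt_right (hb_cont.intervalIntegrable _ _)
      (hb_cont.stronglyMeasurableAtFilter _ _) hb_cont.continuousAt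
  have hinv : ∀ τ, ((lam τ)^2)⁻¹ = Real.exp (-B τ) := fun τ => by
    rw [hlam, ← Real.exp_nat_mul, ← Real.exp_neg]
    congr 1
    simp only [B]
    ring
  have hf : ∀ τ, HasDerivAt (fun s => Real.exp (-B s)) (-(b τ * Real.exp (-B τ))) τ :=
    fun τ => (hB τ).neg.exp.congr_deriv (by simp only [Pi.neg_apply]; ring)
  have hf_nonneg : ∀ τ, 0 ≤ Real.exp (-B τ) := fun τ => (Real.exp_pos _).le
  refine ⟨1, t₀ + (1 - c)⁻¹, one_pos, add_pos_of_nonneg_of_pos ht₀ (inv_pos.2 (sub_pos.2 hc)),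
    fun t ht => ?_⟩
  simp only [div_eq_mul_inv, hinv]
  constructor
  · simpa using ((antitoneOn_Ici_of_hasDerivAt_neg_mul hf hf_nonneg hb_nonneg).mono
      Icc_subset_Ici_self).sub_mul_le_integral ht
  · have hupper := integral_le_add_mul_div_of_hasDerivAt_neg_mul hf hb_cont hf_nonneg (by simp [B])
      hb_nonneg hc ht₀ hbc ht
    have hx : 0 ≤ t * Real.exp (-B t) := mul_nonneg ht (hf_nonneg t)
    have hk : 0 ≤ (1 - c)⁻¹ := inv_nonneg.2 (sub_nonneg.2 hc.le)
    rw [div_eq_mul_inv] at hupper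
    nlinarith [mul_nonneg ht₀ hx, mul_nonneg hk hx]
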